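/- Let Λ ∈ GL(d,ℝ), and define q(p₀,…,p_{n−1},Λ) = (Λ⁻¹(p₁−p₀), …, Λ⁻¹(p_{n−1}−p₀), ΛᵀΛ). Then for any Euclidean isometry u(x) = Ux + t with U ∈ O(d,ℝ), q(u(p₀),…,u(p_{n−1}), UΛ) = q(p₀,…,p_{n−1},Λ); conversely, if q(p₀,…,p_{n−1},Λ) = q(p₀',…,p_{n−1}',Λ') then there is an isometry u with u(p_i) = p_i' for all i and UΛ = Λ'. -/

import Mathlib

/-!
Translations are killed by taking differences `pᵢ - p₀`, and rotations by reading those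
differences in lattice coordinates: `(UΛ)⁻¹ U = Λ⁻¹` and `(UΛ)ᵀ(UΛ) = ΛᵀΛ` for orthogonal `U`.
Conversely, equal Gram matrices `ΛᵀΛ = Λ'ᵀΛ'` make `U = Λ'Λ⁻¹` orthogonal with `UΛ = Λ'`. Moving
`p` by `U` and the translation that sends `U p₀` to `p'₀` gives a placement with lattice `Λ'`,
base point `p'₀` and the same lattice coordinates as `p'`, hence equal to `p'`.
-/

open Matrix

/-- The quotient map `q(p₀,…,p_{n−1},Λ) = (Λ⁻¹(p₁−p₀), …, Λ⁻¹(p_{n−1}−p₀), ΛᵀΛ)`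
(recorded for all indices `i`; the entry at `i = 0` is `0`). -/
noncomputable def placementInvariant {d n : ℕ} (p : Fin (n + 1) → Fin d → ℝ)
    (Λ : Matrix (Fin d) (Fin d) ℝ) :
    (Fin (n + 1) → Fin d → ℝ) × Matrix (Fin d) (Fin d) ℝ :=
  (fun i => Λ⁻¹.mulVec (p i - p 0), Λᵀ * Λ)

namespace Matrix

variable {ι R : Type*} [Fintype ι] [DecidableEq ι] [CommRing R]

theorem mul_inv_mem_orthogonalGroup_of_transpose_mul_self_eq {A B : Matrix ι ι R}
    (hA : IsUnit A.det) (h : Aᵀ * A = Bᵀ * B) : B * A⁻¹ ∈ orthogonalGroup ι R := by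
  rw [mem_orthogonalGroup_iff']
  calc (B * A⁻¹)ᵀ * (B * A⁻¹) = A⁻¹ᵀ * (Bᵀ * B) * A⁻¹ := by
        simp only [transpose_mul, Matrix.mul_assoc]
    _ = (A * A⁻¹)ᵀ * (A * A⁻¹) := by
        rw [← h]; simp only [transpose_mul, Matrix.mul_assoc]
    _ = 1 := by rw [mul_nonsing_inv A hA, transpose_one, Matrix.one_mul]

theorem isUnit_det_mul_of_mem_orthogonalGroup {U A : Matrix ι ι R}
    (hU : U ∈ orthogonalGroup ι R) (hA : IsUnit A.det) : IsUnit (U * A).det := by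
  rw [det_mul]
  exact (isUnit_det_of_left_inverse ((mem_orthogonalGroup_iff' ι R).1 hU)).mul hA

end Matrix

theorem placementInvariant_orthogonal_affine {d n : ℕ} (p : Fin (n + 1) → Fin d → ℝ)
    (Λ : Matrix (Fin d) (Fin d) ℝ) {U : Matrix (Fin d) (Fin d) ℝ}
    (hU : U ∈ orthogonalGroup (Fin d) ℝ) (t : Fin d → ℝ) :
    placementInvariant (fun i => U *ᵥ p i + t) (U * Λ) = placementInvariant p Λ := by
  have hUU : Uᵀ * U = 1 := (mem_orthogonalGroup_iff' (Fin d) ℝ).1 hU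
  have hUinv : U⁻¹ = Uᵀ := inv_eq_left_inv hUU
  refine Prod.ext (funext fun i => ?_) ?_
  · calc (U * Λ)⁻¹ *ᵥ ((U *ᵥ p i + t) - (U *ᵥ p 0 + t))
          = Λ⁻¹ *ᵥ ((Uᵀ * U) *ᵥ (p i - p 0)) := by
            rw [add_sub_add_right_eq_sub, ← mulVec_sub, Matrix.mul_inv_rev, hUinv, mulVec_mulVec,
              mulVec_mulVec, Matrix.mul_assoc]
      _ = Λ⁻¹ *ᵥ (p i - p 0) := by rw [hUU, one_mulVec]
  · change (U * Λ)ᵀ * (U * Λ) = Λᵀ * Λ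
    rw [transpose_mul, Matrix.mul_assoc, ← Matrix.mul_assoc Uᵀ, hUU, Matrix.one_mul]

theorem eq_of_placementInvariant_eq_of_apply_zero_eq {d n : ℕ}
    {p p' : Fin (n + 1) → Fin d → ℝ} {Λ : Matrix (Fin d) (Fin d) ℝ} (hΛ : IsUnit Λ.det)
    (h₀ : p 0 = p' 0) (h : placementInvariant p Λ = placementInvariant p' Λ) : p = p' := by
  funext i
  have hcoord : Λ⁻¹ *ᵥ (p i - p 0) = Λ⁻¹ *ᵥ (p' i - p' 0) := congrFun (congrArg Prod.fst h) i
  have hdiff := mulVec_injective_iff_isUnit.2 ((isUnit_iff_isUnit_det _).2 (isUnit_nonsing_inv_det Λ hΛ)) hcoord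
  rwa [h₀, sub_left_inj] at hdiff

theorem placementInvariant_complete_general {d n : ℕ}
    (p p' : Fin (n + 1) → Fin d → ℝ) (Λ Λ' : Matrix (Fin d) (Fin d) ℝ)
    (hΛ : IsUnit Λ.det) :
    (∀ U ∈ Matrix.orthogonalGroup (Fin d) ℝ, ∀ t : Fin d → ℝ,
      placementInvariant (fun i => U.mulVec (p i) + t) (U * Λ) =
        placementInvariant p Λ) ∧
    (placementInvariant p Λ = placementInvariant p' Λ' →
      ∃ U ∈ Matrix.orthogonalGroup (Fin d) ℝ, ∃ t : Fin d → ℝ,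
        (∀ i, U.mulVec (p i) + t = p' i) ∧ U * Λ = Λ') := by
  refine ⟨fun U hU t => placementInvariant_orthogonal_affine p Λ hU t, fun h => ?_⟩
  have hU := mul_inv_mem_orthogonalGroup_of_transpose_mul_self_eq hΛ (congrArg Prod.snd h)
  have hUΛ : Λ' * Λ⁻¹ * Λ = Λ' := nonsing_inv_mul_cancel_right Λ Λ' hΛ
  set U := Λ' * Λ⁻¹
  set t := p' 0 - U *ᵥ p 0
  have hmoved : (fun i => U *ᵥ p i + t) = p' := by
    refine eq_of_placementInvariant_eq_of_apply_zero_eq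
      (isUnit_det_mul_of_mem_orthogonalGroup hU hΛ) (add_sub_cancel _ _) ?_
    rw [placementInvariant_orthogonal_affine p Λ hU t, h, hUΛ]
  exact ⟨U, hU, t, congrFun hmoved, hUΛ⟩

/-- `q` is a complete invariant for the action of the Euclidean group
`E(d)` on placements `(p₀,…,p_{n−1},Λ)`: it is invariant under every isometry
`u(x) = Ux + t`, and two placements with the same invariant differ by an isometry. -/
theorem placementInvariant_complete {d n : ℕ}
    (p p' : Fin (n + 1) → Fin d → ℝ) (Λ Λ' : Matrix (Fin d) (Fin d) ℝ)
    (hΛ : IsUnit Λ.det) (hΛ' : IsUnit Λ'.det) :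
    (∀ U ∈ Matrix.orthogonalGroup (Fin d) ℝ, ∀ t : Fin d → ℝ,
      placementInvariant (fun i => U.mulVec (p i) + t) (U * Λ) =
        placementInvariant p Λ) ∧
    (placementInvariant p Λ = placementInvariant p' Λ' →
      ∃ U ∈ Matrix.orthogonalGroup (Fin d) ℝ, ∃ t : Fin d → ℝ,
        (∀ i, U.mulVec (p i) + t = p' i) ∧ U * Λ = Λ') :=
  placementInvariant_complete_general p p' Λ Λ' hΛ
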